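/- If > is a total precedence on a signature F, then the Knuth–Bendix order >_kbo (with admissible weight function) is total on ground terms: for all ground terms s, t, either s >_kbo t, or t >_kbo s, or s = t. -/

import Mathlib

/-- First-order terms over a signature `F` with natural-number variables. -/
inductive Term (F : Type) : Type
  | var : ℕ → Term F
  | fn : F → List (Term F) → Term F

namespace Term

mutual
/-- Application of a substitution to a term. -/
def subst {F : Type} (σ : ℕ → Term F) : Term F → Term F
  | var x => σ x
  | fn f ts => fn f (substL σ ts)
/-- Application of a substitution to a list of terms. -/
def substL {F : Type} (σ : ℕ → Term F) : List (Term F) → List (Term F)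
  | [] => []
  | t :: ts => subst σ t :: substL σ ts
end

/-- Ground terms: terms without variables. -/
inductive IsGround {F : Type} : Term F → Prop
  | fn : ∀ (f : F) (ts : List (Term F)), (∀ t ∈ ts, IsGround t) → IsGround (fn f ts)

/-- Well-formed terms with respect to an arity function. -/
inductive WF {F : Type} (ar : F → ℕ) : Term F → Prop
  | var : ∀ x, WF ar (var x)
  | fn : ∀ (f : F) (ts : List (Term F)), ts.length = ar f →
      (∀ t ∈ ts, WF ar t) → WF ar (fn f ts)

/-- The variable `x` occurs in a term. -/
inductive Occurs {F : Type} (x : ℕ) : Term F → Prop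
  | var : Occurs x (var x)
  | fn : ∀ {f ts t}, t ∈ ts → Occurs x t → Occurs x (fn f ts)

end Term

open Term

/-- A substitution is a renaming (variable permutation) if it is given by a
bijection on variables. -/
def IsRenaming {F : Type} (π : ℕ → Term F) : Prop :=
  ∃ ρ : ℕ ≃ ℕ, ∀ x, π x = Term.var (ρ x)

/-- One-step rewrite relation generated by a set of rules: closure of the
rules under substitutions and contexts. -/
inductive Rew {F : Type} (R : Set (Term F × Term F)) : Term F → Term F → Prop
  | rule : ∀ {l r : Term F}, (l, r) ∈ R → ∀ (σ : ℕ → Term F),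
      Rew R (subst σ l) (subst σ r)
  | ctxt : ∀ {s t : Term F} (f : F) (as bs : List (Term F)), Rew R s t →
      Rew R (fn f (as ++ s :: bs)) (fn f (as ++ t :: bs))

/-- Symmetric closure of a set of equations. -/
def symcl {F : Type} (E : Set (Term F × Term F)) : Set (Term F × Term F) :=
  E ∪ {p | (p.2, p.1) ∈ E}

/-- `E^>`: all orientable instances of equations in the symmetric closure of `E`. -/
def ordInst {F : Type} (gt : Term F → Term F → Prop)
    (E : Set (Term F × Term F)) : Set (Term F × Term F) :=
  {p | ∃ (u v : Term F) (σ : ℕ → Term F), (u, v) ∈ symcl E ∧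
    p = (subst σ u, subst σ v) ∧ gt (subst σ u) (subst σ v)}

/-- Many-step rewriting. -/
def RStar {F : Type} (S : Set (Term F × Term F)) : Term F → Term F → Prop :=
  Relation.ReflTransGen (Rew S)

/-- Conversion: reflexive-transitive closure of rewriting in both directions. -/
def Conv {F : Type} (S : Set (Term F × Term F)) : Term F → Term F → Prop :=
  Relation.ReflTransGen (fun a b => Rew S a b ∨ Rew S b a)

/-- Joinability. -/
def Joinable {F : Type} (S : Set (Term F × Term F)) (s t : Term F) : Prop :=
  ∃ u, RStar S s u ∧ RStar S t u

/-- Termination of an abstract relation. -/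
def Terminating {A : Type} (r : A → A → Prop) : Prop :=
  WellFounded (fun a b => r b a)

/-- A reduction order: well-founded strict order on terms closed under
contexts and substitutions. -/
structure RedOrder (F : Type) where
  gt : Term F → Term F → Prop
  wf : WellFounded fun s t => gt t s
  trans : ∀ {s t u}, gt s t → gt t u → gt s u
  irrefl : ∀ s, ¬ gt s s
  subst_mono : ∀ {s t} (σ : ℕ → Term F), gt s t → gt (subst σ s) (subst σ t)
  ctxt_mono : ∀ {s t} (f : F) (as bs : List (Term F)), gt s t →
      gt (fn f (as ++ s :: bs)) (fn f (as ++ t :: bs))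

/-- Ground-totality of an order. -/
def GroundTotal {F : Type} (gt : Term F → Term F → Prop) : Prop :=
  ∀ s t : Term F, IsGround s → IsGround t → s ≠ t → gt s t ∨ gt t s

/-- Subterm at a position. -/
inductive SubtAt {F : Type} : Term F → List ℕ → Term F → Prop
  | refl : ∀ t, SubtAt t [] t
  | step : ∀ {f : F} {ts : List (Term F)} {i u p v},
      ts[i]? = some u → SubtAt u p v → SubtAt (fn f ts) (i :: p) v

/-- Replacement of the subterm at a position. -/
inductive ReplAt {F : Type} : Term F → List ℕ → Term F → Term F → Prop
  | refl : ∀ t u, ReplAt t [] u u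
  | step : ∀ {f : F} {ts : List (Term F)} {i u p v u'},
      ts[i]? = some u → ReplAt u p v u' →
      ReplAt (fn f ts) (i :: p) v (fn f (ts.set i u'))

/-- Extended critical pairs of a set of equations w.r.t. an order. -/
def ECP {F : Type} (gt : Term F → Term F → Prop)
    (E : Set (Term F × Term F)) : Set (Term F × Term F) :=
  {p | ∃ (e₁ e₂ : Term F × Term F) (π₁ π₂ μ : ℕ → Term F)
        (pos : List ℕ) (lsub l₂c : Term F),
    e₁ ∈ symcl E ∧ e₂ ∈ symcl E ∧ IsRenaming π₁ ∧ IsRenaming π₂ ∧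
    -- the variants are variable disjoint
    (∀ x, (Occurs x (subst π₁ e₁.1) ∨ Occurs x (subst π₁ e₁.2)) →
          ¬ (Occurs x (subst π₂ e₂.1) ∨ Occurs x (subst π₂ e₂.2))) ∧
    -- a function-symbol position of l₂
    SubtAt (subst π₂ e₂.1) pos lsub ∧ (∀ x, lsub ≠ Term.var x) ∧
    -- μ is a most general unifier of l₁ and l₂|_pos
    subst μ (subst π₁ e₁.1) = subst μ lsub ∧
    (∀ θ : ℕ → Term F, subst θ (subst π₁ e₁.1) = subst θ lsub →
      ∃ δ : ℕ → Term F, ∀ x, θ x = subst δ (subst μ (Term.var x))) ∧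
    -- orientation conditions
    ¬ gt (subst μ (subst π₁ e₁.2)) (subst μ (subst π₁ e₁.1)) ∧
    ¬ gt (subst μ (subst π₂ e₂.2)) (subst μ (subst π₂ e₂.1)) ∧
    -- the extended critical pair l₂[r₁]_pos μ ≈ r₂ μ
    ReplAt (subst π₂ e₂.1) pos (subst π₁ e₁.2) l₂c ∧
    p = (subst μ l₂c, subst μ (subst π₂ e₂.2))}

/-- The inference system oKB of ordered completion. -/
inductive OKB {F : Type} (gt : Term F → Term F → Prop) :
    Set (Term F × Term F) × Set (Term F × Term F) →
    Set (Term F × Term F) × Set (Term F × Term F) → Prop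
  | deduce : ∀ E R (s t u : Term F) (π : ℕ → Term F), IsRenaming π →
      Rew (R ∪ E) u s → Rew (R ∪ E) u t →
      OKB gt (E, R) (insert (subst π s, subst π t) E, R)
  | orient_lr : ∀ E R (s t : Term F) (π : ℕ → Term F), IsRenaming π → gt s t →
      OKB gt (insert (s, t) E, R) (E, insert (subst π s, subst π t) R)
  | orient_rl : ∀ E R (s t : Term F) (π : ℕ → Term F), IsRenaming π → gt t s →
      OKB gt (insert (s, t) E, R) (E, insert (subst π t, subst π s) R)
  | delete : ∀ E R (s : Term F), OKB gt (insert (s, s) E, R) (E, R)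
  | compose : ∀ E R (s t u : Term F) (π : ℕ → Term F), IsRenaming π →
      Rew (insert (s, t) R ∪ ordInst gt E) t u →
      OKB gt (E, insert (s, t) R) (E, insert (subst π s, subst π u) R)
  | simplify_l : ∀ E R (s t u : Term F) (π : ℕ → Term F), IsRenaming π →
      Rew (R ∪ ordInst gt (insert (s, t) E)) s u →
      OKB gt (insert (s, t) E, R) (insert (subst π u, subst π t) E, R)
  | simplify_r : ∀ E R (s t u : Term F) (π : ℕ → Term F), IsRenaming π →
      Rew (R ∪ ordInst gt (insert (s, t) E)) t u →
      OKB gt (insert (s, t) E, R) (insert (subst π s, subst π u) E, R)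
  | collapse : ∀ E R (s t u : Term F) (π : ℕ → Term F), IsRenaming π →
      Rew (insert (t, s) R ∪ ordInst gt E) t u →
      OKB gt (E, insert (t, s) R) (insert (subst π u, subst π s) E, R)

/-- Lexicographic extension of a relation to (equal-length) lists. -/
inductive LexExt {A : Type} (r : A → A → Prop) : List A → List A → Prop
  | head : ∀ {a b : A} {as bs : List A}, r a b → as.length = bs.length →
      LexExt r (a :: as) (b :: bs)
  | tail : ∀ {a : A} {as bs : List A}, LexExt r as bs →
      LexExt r (a :: as) (a :: bs)

/-- The lexicographic path order induced by a precedence. -/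
inductive LPO {F : Type} (p : F → F → Prop) : Term F → Term F → Prop
  | sub : ∀ {f ss s t}, s ∈ ss → LPO p s t → LPO p (fn f ss) t
  | subeq : ∀ {f ss t}, t ∈ ss → LPO p (fn f ss) t
  | prec : ∀ {f g ss ts}, p f g → (∀ t ∈ ts, LPO p (fn f ss) t) →
      LPO p (fn f ss) (fn g ts)
  | lex : ∀ {f ss ts}, (∀ t ∈ ts, LPO p (fn f ss) t) → LexExt (LPO p) ss ts →
      LPO p (fn f ss) (fn f ts)

mutual
/-- Weight of a term. -/
def wt {F : Type} (w : F → ℕ) (w0 : ℕ) : Term F → ℕ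
  | Term.var _ => w0
  | Term.fn f ts => w f + wtL w w0 ts
/-- Sum of the weights of a list of terms. -/
def wtL {F : Type} (w : F → ℕ) (w0 : ℕ) : List (Term F) → ℕ
  | [] => 0
  | t :: ts => wt w w0 t + wtL w w0 ts
end

/-- The Knuth–Bendix order on ground terms. -/
inductive KBO {F : Type} (p : F → F → Prop) (w : F → ℕ) (w0 : ℕ) :
    Term F → Term F → Prop
  | wgt : ∀ {f g ss ts}, wt w w0 (fn f ss) > wt w w0 (fn g ts) →
      KBO p w w0 (fn f ss) (fn g ts)
  | prec : ∀ {f g ss ts}, wt w w0 (fn f ss) = wt w w0 (fn g ts) → p f g →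
      KBO p w w0 (fn f ss) (fn g ts)
  | lex : ∀ {f ss ts}, wt w w0 (fn f ss) = wt w w0 (fn f ts) →
      LexExt (KBO p w w0) ss ts → KBO p w w0 (fn f ss) (fn f ts)

/-- Admissibility of a weight function for a precedence. -/
def Admissible {F : Type} (ar : F → ℕ) (p : F → F → Prop)
    (w : F → ℕ) (w0 : ℕ) : Prop :=
  0 < w0 ∧ (∀ c, ar c = 0 → w0 ≤ w c) ∧
  (∀ f, ar f = 1 → w f = 0 → ∀ g, g ≠ f → p f g)

theorem LexExt.trichotomous_of_length_eq {A : Type} {r : A → A → Prop} :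
    ∀ {ss ts : List A}, ss.length = ts.length →
      (∀ s ∈ ss, ∀ t ∈ ts, r s t ∨ r t s ∨ s = t) →
      LexExt r ss ts ∨ LexExt r ts ss ∨ ss = ts
  | [], [], _, _ => Or.inr (Or.inr rfl)
  | a :: as, b :: bs, hlen, htri => by
    have hlen' : as.length = bs.length := Nat.succ.inj hlen
    rcases htri a List.mem_cons_self b List.mem_cons_self with hab | hba | rfl
    · exact Or.inl (LexExt.head hab hlen')
    · exact Or.inr (Or.inl (LexExt.head hba hlen'.symm))
    · have htri' : ∀ s ∈ as, ∀ t ∈ bs, r s t ∨ r t s ∨ s = t := fun s hs t ht =>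
        htri s (List.mem_cons_of_mem _ hs) t (List.mem_cons_of_mem _ ht)
      rcases trichotomous_of_length_eq hlen' htri' with h | h | rfl
      · exact Or.inl (LexExt.tail h)
      · exact Or.inr (Or.inl (LexExt.tail h))
      · exact Or.inr (Or.inr rfl)

namespace Term.WF

variable {F : Type} {ar : F → ℕ} {f : F} {ss ts : List (Term F)}

theorem of_mem_args (h : WF ar (Term.fn f ts)) {t : Term F} (ht : t ∈ ts) : WF ar t := by
  cases h with
  | fn _ _ _ hargs => exact hargs t ht

theorem length_args_eq (hs : WF ar (Term.fn f ss)) (ht : WF ar (Term.fn f ts)) :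
    ss.length = ts.length := by
  cases hs with
  | fn _ _ hss _ => cases ht with
    | fn _ _ hts _ => rw [hss, hts]

end Term.WF

/- Equal weight and head leave the lexicographic comparison of the arguments, which the induction
hypothesis decides because well-formed terms with the same head have equally many arguments. -/
theorem KBO.trichotomous_of_isGround {F : Type} {ar : F → ℕ} {p : F → F → Prop}
    (w : F → ℕ) (w0 : ℕ) (hp : ∀ f g : F, p f g ∨ p g f ∨ f = g)
    {s : Term F} (hs : IsGround s) :
    ∀ {t : Term F}, IsGround t → WF ar s → WF ar t →
      KBO p w w0 s t ∨ KBO p w w0 t s ∨ s = t := by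
  induction hs with
  | fn f ss _ ih =>
    rintro t ⟨g, ts, hts⟩ hws hwt
    rcases Nat.lt_trichotomy (wt w w0 (fn f ss)) (wt w w0 (fn g ts)) with hlt | heq | hgt
    · exact Or.inr (Or.inl (KBO.wgt hlt))
    · rcases hp f g with hfg | hgf | rfl
      · exact Or.inl (KBO.prec heq hfg)
      · exact Or.inr (Or.inl (KBO.prec heq.symm hgf))
      · have hargs : ∀ s ∈ ss, ∀ t ∈ ts, KBO p w w0 s t ∨ KBO p w w0 t s ∨ s = t :=
          fun s hs t ht => ih s hs (hts t ht) (hws.of_mem_args hs) (hwt.of_mem_args ht)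
        rcases LexExt.trichotomous_of_length_eq (hws.length_args_eq hwt) hargs with h | h | rfl
        · exact Or.inl (KBO.lex heq h)
        · exact Or.inr (Or.inl (KBO.lex heq.symm h))
        · exact Or.inr (Or.inr rfl)
    · exact Or.inl (KBO.wgt hgt)

/-- KBO over a total precedence is total on ground terms. -/
theorem kbo_ground_total {F : Type} (ar : F → ℕ) (p : F → F → Prop)
    (w : F → ℕ) (w0 : ℕ) (hadm : Admissible ar p w w0)
    (hp : ∀ f g : F, p f g ∨ p g f ∨ f = g) :
    ∀ s t : Term F, Term.IsGround s → Term.IsGround t →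
      Term.WF ar s → Term.WF ar t →
      KBO p w w0 s t ∨ KBO p w w0 t s ∨ s = t :=
  fun _ _ hs ht => KBO.trichotomous_of_isGround w w0 hp hs ht
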